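/- arXiv:2010.06528 — 14 statements merged into one kernel-verified Lean document; each statement's English description precedes it below -/
import Mathlib

section
/- If w and w' are words in S_n that are conjugate (i.e., w = xy and w' = yx for some words x, y), then N(w) = N(w'), where N(w) = Σ_{1≤k≤n-1} k(n-k)·γ_{k,k+1}(w) − Σ_{1≤i<j≤n} γ_{ij}(w). -/
/-- `gamma w i j = 1` if `j` appears before `i` in the word `w`, else `0`. -/
def gamma (w : List ℕ) (i j : ℕ) : ℤ := if w.idxOf j < w.idxOf i then 1 else 0

/-- `N(w) = Σ_{1≤k≤n-1} k(n-k)·γ_{k,k+1}(w) − Σ_{1≤i<j≤n} γ_{ij}(w)`. -/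
def wordN (n : ℕ) (w : List ℕ) : ℤ :=
  (∑ k ∈ Finset.Icc 1 (n - 1), (k : ℤ) * ((n : ℤ) - (k : ℤ)) * gamma w k (k + 1))
  - ∑ i ∈ Finset.Icc 1 n, ∑ j ∈ Finset.Icc 1 n, if i < j then gamma w i j else 0

/-!
A conjugate of `w` is a rotation of `w`, so it suffices to move the first letter `a` of `w` to the
end. This changes `γ_ij` only for the pairs containing `a`: the inversion sum changes by
`(n - a) - (a - 1)`, and the weighted sum by `f a - f (a - 1)` with `f k = k (n - k)`, which is the
same number. Since `f 0 = f n = 0`, the boundary letters `a = 1` and `a = n` need no special care.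
-/

open Finset List

lemma gamma_cons_sub_gamma_concat {a : ℕ} {t : List ℕ} (ha : a ∉ t) {i j : ℕ}
    (hi : i ∈ a :: t) (hj : j ∈ a :: t) (hij : i ≠ j) :
    gamma (a :: t) i j - gamma (t ++ [a]) i j
      = (if j = a then 1 else 0) - (if i = a then 1 else 0) := by
  have hlt {m : ℕ} (hm : m ∈ t) : t.idxOf m < t.length := idxOf_lt_length_iff.2 hm
  have hne {m : ℕ} (hm : m ∈ t) : a ≠ m := fun h => ha (h ▸ hm)
  rcases mem_cons.1 hi with rfl | hit <;> rcases mem_cons.1 hj with rfl | hjt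
  · exact absurd rfl hij
  · simp [gamma, (hne hjt).symm, idxOf_cons_ne _ (hne hjt), idxOf_append_of_mem hjt,
      idxOf_append_of_notMem ha, hlt hjt]
  · simp [gamma, (hne hit).symm, idxOf_cons_ne _ (hne hit), idxOf_append_of_mem hit,
      idxOf_append_of_notMem ha, (hlt hit).le]
  · simp [gamma, (hne hit).symm, (hne hjt).symm, idxOf_cons_ne _ (hne hit),
      idxOf_cons_ne _ (hne hjt), idxOf_append_of_mem hit, idxOf_append_of_mem hjt]

lemma sum_Icc_mul_indicator_succ_sub_indicator {n a : ℕ} (ha : a ∈ Icc 1 n) (f : ℕ → ℤ)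
    (hf0 : f 0 = 0) (hfn : f n = 0) :
    ∑ k ∈ Icc 1 (n - 1), f k * ((if k + 1 = a then 1 else 0) - (if k = a then 1 else 0))
      = f (a - 1) - f a := by
  rw [Finset.mem_Icc] at ha
  have hshift (k : ℕ) : (k + 1 = a) = (k = a - 1) := propext (by omega)
  simp only [mul_sub, mul_ite, mul_one, mul_zero, sum_sub_distrib, hshift, sum_ite_eq']
  congr 1
  · refine ite_eq_left_iff.2 fun h => ?_
    rw [show a - 1 = 0 by simp only [Finset.mem_Icc] at h; omega, hf0]
  · refine ite_eq_left_iff.2 fun h => ?_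
    rw [show a = n by simp only [Finset.mem_Icc] at h; omega, hfn]

lemma sum_Icc_lt_indicator_sub_indicator {n a : ℕ} (ha : a ∈ Icc 1 n) :
    ∑ i ∈ Icc 1 n, ∑ j ∈ Icc 1 n,
      (if i < j then (if j = a then 1 else 0) - (if i = a then 1 else 0) else 0 : ℤ)
      = (a - 1 : ℤ) - (n - a) := by
  have hsplit (i j : ℕ) :
      (if i < j then (if j = a then 1 else 0) - (if i = a then 1 else 0) else 0 : ℤ)
        = (if j = a then (if i < a then 1 else 0) else 0)
          - (if i = a then (if a < j then 1 else 0) else 0) := by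
    split_ifs <;> omega
  simp only [hsplit, sum_sub_distrib, sum_ite_irrel, sum_const_zero, sum_ite_eq', ha, if_true,
    sum_boole]
  rw [Finset.mem_Icc] at ha
  have hlo : (Icc 1 n).filter (· < a) = Icc 1 (a - 1) := by
    ext; simp only [Finset.mem_filter, Finset.mem_Icc]; omega
  have hhi : (Icc 1 n).filter (a < ·) = Icc (a + 1) n := by
    ext; simp only [Finset.mem_filter, Finset.mem_Icc]; omega
  rw [hlo, hhi, Nat.card_Icc, Nat.card_Icc]
  omega

lemma wordN_concat_eq_wordN_cons {n a : ℕ} {t : List ℕ} (h : (a :: t) ~ range' 1 n) :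
    wordN n (t ++ [a]) = wordN n (a :: t) := by
  have hmem (m : ℕ) : m ∈ a :: t ↔ m ∈ Icc 1 n := by
    rw [h.mem_iff, mem_range'_1, Finset.mem_Icc]; omega
  have ha : a ∉ t := (nodup_cons.1 (h.nodup_iff.2 nodup_range')).1
  have haI : a ∈ Icc 1 n := (hmem a).1 mem_cons_self
  have hgamma {i j : ℕ} (hi : i ∈ Icc 1 n) (hj : j ∈ Icc 1 n) (hij : i ≠ j) :=
    gamma_cons_sub_gamma_concat ha ((hmem i).2 hi) ((hmem j).2 hj) hij
  have hadjacent :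
      ∑ k ∈ Icc 1 (n - 1), (k : ℤ) * (n - k) * gamma (a :: t) k (k + 1)
        - ∑ k ∈ Icc 1 (n - 1), (k : ℤ) * (n - k) * gamma (t ++ [a]) k (k + 1)
        = (a - 1 : ℤ) - (n - a) := by
    calc _ = ∑ k ∈ Icc 1 (n - 1), (k : ℤ) * (n - k) *
          ((if k + 1 = a then 1 else 0) - (if k = a then 1 else 0)) := by
          rw [← sum_sub_distrib]
          refine sum_congr rfl fun k hk => ?_
          rw [Finset.mem_Icc] at hk
          rw [← mul_sub,
            hgamma (Finset.mem_Icc.2 (by omega)) (Finset.mem_Icc.2 (by omega)) (by omega)]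
      _ = ((a - 1 : ℕ) : ℤ) * (n - (a - 1 : ℕ)) - a * (n - a) :=
          sum_Icc_mul_indicator_succ_sub_indicator haI (fun k => (k : ℤ) * (n - k))
            (by simp) (by simp)
      _ = (a - 1 : ℤ) - (n - a) := by
          rw [Finset.mem_Icc] at haI
          push_cast [haI.1]
          ring
  have hinversions :
      ∑ i ∈ Icc 1 n, ∑ j ∈ Icc 1 n, (if i < j then gamma (a :: t) i j else 0)
        - ∑ i ∈ Icc 1 n, ∑ j ∈ Icc 1 n, (if i < j then gamma (t ++ [a]) i j else 0)
        = (a - 1 : ℤ) - (n - a) := by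
    rw [← sum_Icc_lt_indicator_sub_indicator haI, ← sum_sub_distrib]
    refine sum_congr rfl fun i hi => ?_
    rw [← sum_sub_distrib]
    refine sum_congr rfl fun j hj => ?_
    by_cases hij : i < j
    · simp only [if_pos hij]
      exact hgamma hi hj hij.ne
    · simp only [if_neg hij, sub_zero]
  unfold wordN
  linarith

lemma wordN_rotate_one {n : ℕ} {w : List ℕ} (hw : w ~ range' 1 n) :
    wordN n (w.rotate 1) = wordN n w := by
  cases w with
  | nil => rfl
  | cons a t => rw [rotate_cons_succ, rotate_zero]; exact wordN_concat_eq_wordN_cons hw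

lemma wordN_rotate {n : ℕ} {w : List ℕ} (hw : w ~ range' 1 n) (k : ℕ) :
    wordN n (w.rotate k) = wordN n w := by
  induction k with
  | zero => rw [rotate_zero]
  | succ k ih => rw [← rotate_rotate, wordN_rotate_one ((rotate_perm w k).trans hw), ih]

theorem N_conjugation_invariant (n : ℕ) (x y : List ℕ)
    (hperm : (x ++ y).Perm (List.range' 1 n)) :
    wordN n (x ++ y) = wordN n (y ++ x) := by
  rw [← rotate_append_length_eq x y]
  exact (wordN_rotate hperm _).symm
end

section
/- If a permutation-word w ∈ S_n has a factor sr with s > r+1, and w' is obtained from w by exchanging the positions of r and s, then N(w') = N(w) + 1, where N(w) = Σ_{1≤k≤n-1} k(n-k)·γ_{k,k+1}(w) − Σ_{1≤i<j≤n} γ_{ij}(w). -/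
/-!
Exchanging the letters `r` and `s` of the factor `sr` is the same as exchanging their
positions, so `w'` differs from `w` by one adjacent transposition. Such a move changes the
relative order of no pair of letters except `{r, s}` itself: `γ_{rs}` drops from `1` to `0`
and every other `γ_{ij}` is unchanged. Since `s > r + 1`, the pair `{r, s}` is not of the form
`{k, k + 1}`, so the weighted first sum of `N` is unchanged and the second sum drops by one.
-/

namespace List

variable {α β : Type*} [DecidableEq α] [DecidableEq β]

theorem idxOf_map_of_injective {f : α → β} (hf : f.Injective) (l : List α) (a : α) :
    (l.map f).idxOf (f a) = l.idxOf a := by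
  induction l with
  | nil => rfl
  | cons b l ih => by_cases h : b = a <;> simp [h, hf.ne, ih]

theorem idxOf_eq_idxOf_add_one_of_infix {l : List α} {a b : α} (hl : l.Nodup)
    (h : [a, b] <:+: l) : l.idxOf b = l.idxOf a + 1 := by
  obtain ⟨u, v, rfl⟩ := h
  grind [nodup_append, idxOf_append_of_notMem, idxOf_cons_ne, idxOf_cons_self]

end List

theorem Finset.sum_sum_eq_add_sub_of_eq_of_ne {ι M : Type*} [AddCommGroup M] {S : Finset ι}
    {f g : ι → ι → M} {a b : ι} (ha : a ∈ S) (hb : b ∈ S)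
    (h : ∀ i j, ¬(i = a ∧ j = b) → f i j = g i j) :
    ∑ i ∈ S, ∑ j ∈ S, f i j = ∑ i ∈ S, ∑ j ∈ S, g i j + (f a b - g a b) := by
  rw [← Finset.sum_product', ← Finset.sum_product', ← sub_eq_iff_eq_add',
    ← Finset.sum_sub_distrib]
  refine Finset.sum_eq_single_of_mem (a, b) (Finset.mem_product.2 ⟨ha, hb⟩) fun p _ hp => ?_
  exact sub_eq_zero.2 (h _ _ fun ⟨h1, h2⟩ => hp (Prod.ext h1 h2))

section Gamma

variable {w : List ℕ} {r s : ℕ}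

theorem gamma_map_apply {f : ℕ → ℕ} (hf : f.Injective) (w : List ℕ) (i j : ℕ) :
    gamma (w.map f) (f i) (f j) = gamma w i j := by
  simp only [gamma, List.idxOf_map_of_injective hf]

theorem gamma_swap_of_idxOf_eq_add_one (hr : r ∈ w) (hadj : w.idxOf r = w.idxOf s + 1)
    {i j : ℕ} (hij : ¬(i = r ∧ j = s)) (hji : ¬(i = s ∧ j = r)) :
    gamma w (Equiv.swap r s i) (Equiv.swap r s j) = gamma w i j := by
  have hs : s ∈ w :=
    List.idxOf_lt_length_iff.1 (by have := List.idxOf_lt_length_iff.2 hr; omega)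
  have hsep : ∀ x, x ≠ r → x ≠ s → w.idxOf x ≠ w.idxOf r ∧ w.idxOf x ≠ w.idxOf s :=
    fun x hxr hxs => ⟨fun h => hxr ((List.idxOf_inj hr).1 h.symm).symm,
      fun h => hxs ((List.idxOf_inj hs).1 h.symm).symm⟩
  have hi := hsep i
  have hj := hsep j
  simp only [gamma, Equiv.swap_apply_def]
  grind

theorem gamma_map_swap_of_idxOf_eq_add_one (hr : r ∈ w) (hadj : w.idxOf r = w.idxOf s + 1)
    {i j : ℕ} (hij : ¬(i = r ∧ j = s)) (hji : ¬(i = s ∧ j = r)) :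
    gamma (w.map (Equiv.swap r s)) i j = gamma w i j := by
  rw [← gamma_swap_of_idxOf_eq_add_one hr hadj hij hji,
    ← gamma_map_apply (Equiv.swap r s).injective w, Equiv.swap_apply_self,
    Equiv.swap_apply_self]

theorem gamma_of_idxOf_eq_add_one (hadj : w.idxOf r = w.idxOf s + 1) : gamma w r s = 1 := by
  rw [gamma, if_pos (by omega)]

theorem gamma_map_swap_self_of_idxOf_eq_add_one (hadj : w.idxOf r = w.idxOf s + 1) :
    gamma (w.map (Equiv.swap r s)) r s = 0 := by
  have h := gamma_map_apply (Equiv.swap r s).injective w s r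
  rw [Equiv.swap_apply_right, Equiv.swap_apply_left] at h
  rw [h, gamma, if_neg (by omega)]

theorem sum_inversions_map_swap_of_idxOf_eq_add_one {S : Finset ℕ} (hrS : r ∈ S) (hsS : s ∈ S)
    (hrs : r < s) (hr : r ∈ w) (hadj : w.idxOf r = w.idxOf s + 1) :
    (∑ i ∈ S, ∑ j ∈ S, if i < j then gamma (w.map (Equiv.swap r s)) i j else 0) =
      (∑ i ∈ S, ∑ j ∈ S, if i < j then gamma w i j else 0) - 1 := by
  rw [Finset.sum_sum_eq_add_sub_of_eq_of_ne (g := fun i j => if i < j then gamma w i j else 0)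
      hrS hsS fun i j hij => ?_, if_pos hrs, if_pos hrs, gamma_of_idxOf_eq_add_one hadj,
    gamma_map_swap_self_of_idxOf_eq_add_one hadj, zero_sub, sub_eq_add_neg]
  by_cases hlt : i < j
  · rw [if_pos hlt, if_pos hlt, gamma_map_swap_of_idxOf_eq_add_one hr hadj hij (by omega)]
  · rw [if_neg hlt, if_neg hlt]

end Gamma

theorem N_exchange_factor (n : ℕ) (w : List ℕ) (r s : ℕ)
    (hperm : w.Perm (List.range' 1 n)) (hrs : r + 1 < s)
    (hfac : [s, r] <:+: w) :
    wordN n (w.map (fun x => if x = r then s else if x = s then r else x))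
      = wordN n w + 1 := by
  have hadj : w.idxOf r = w.idxOf s + 1 :=
    List.idxOf_eq_idxOf_add_one_of_infix (hperm.nodup_iff.2 List.nodup_range') hfac
  have hr : r ∈ w := hfac.subset (by simp)
  have hs : s ∈ w := hfac.subset (by simp)
  have hmem : ∀ x ∈ w, x ∈ Finset.Icc 1 n := fun x hx => by
    have := List.mem_range'_1.1 (hperm.subset hx)
    rw [Finset.mem_Icc]
    omega
  have hswap : (fun x => if x = r then s else if x = s then r else x) = Equiv.swap r s :=
    funext fun x => (Equiv.swap_apply_def r s x).symm
  have hweighted : ∀ k, gamma (w.map (Equiv.swap r s)) k (k + 1) = gamma w k (k + 1) :=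
    fun k => gamma_map_swap_of_idxOf_eq_add_one hr hadj (by omega) (by omega)
  simp only [hswap, wordN, hweighted, sum_inversions_map_swap_of_idxOf_eq_add_one (hmem r hr)
    (hmem s hs) (by omega : r < s) hr hadj]
  ring
end

section
/- For every permutation w ∈ S_n, the vector V_0(w) defined by v_{ij} = −γ_{ij}(w) + Σ_{i≤k<j} γ_{k,k+1}(w) for 1 ≤ i < j ≤ n is an admitted vector: v_{i,i+1} = 0 for all i, and v_{ij} + v_{jk} ≤ v_{ik} ≤ v_{ij} + v_{jk} + 1 for all i < j < k; in particular all components are nonnegative. -/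
/-- The vector `V₀(w)`, with `v_{ij} = −γ_{ij}(w) + Σ_{i≤k<j} γ_{k,k+1}(w)`. -/
def V0 (w : List ℕ) (i j : ℕ) : ℤ :=
  - gamma w i j + ∑ k ∈ Finset.Ico i j, gamma w k (k + 1)

/-!
Since `Σ_{i≤m<j} γ_{m,m+1}` is additive in the interval, `v_{ij} + v_{jk} - v_{ik}` equals
`γ_{ik} - γ_{ij} - γ_{jk}`, which lies in `{-1, 0}` because "occurs before" in `w` is a strict
total preorder. Nonnegativity is the telescoped triangle inequality `γ_{ij} ≤ Σ_{i≤m<j} γ_{m,m+1}`.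
-/

lemma gamma_self (w : List ℕ) (i : ℕ) : gamma w i i = 0 := by
  simp [gamma]

lemma gamma_le_gamma_add_gamma (w : List ℕ) (i j k : ℕ) :
    gamma w i k ≤ gamma w i j + gamma w j k := by
  unfold gamma; split_ifs <;> omega

lemma gamma_add_gamma_le_gamma_add_one (w : List ℕ) (i j k : ℕ) :
    gamma w i j + gamma w j k ≤ gamma w i k + 1 := by
  unfold gamma; split_ifs <;> omega

lemma gamma_le_sum_gamma_succ (w : List ℕ) {i j : ℕ} (hij : i ≤ j) :
    gamma w i j ≤ ∑ m ∈ Finset.Ico i j, gamma w m (m + 1) := by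
  induction j, hij using Nat.le_induction with
  | base => simp [gamma_self]
  | succ j hij ih =>
    rw [Finset.sum_Ico_succ_top hij]
    linarith [gamma_le_gamma_add_gamma w i j (j + 1)]

lemma V0_self_succ (w : List ℕ) (i : ℕ) : V0 w i (i + 1) = 0 := by
  simp [V0]

lemma V0_nonneg (w : List ℕ) {i j : ℕ} (hij : i ≤ j) : 0 ≤ V0 w i j := by
  unfold V0
  linarith [gamma_le_sum_gamma_succ w hij]

lemma V0_add_V0 (w : List ℕ) {i j k : ℕ} (hij : i ≤ j) (hjk : j ≤ k) :
    V0 w i j + V0 w j k = V0 w i k + gamma w i k - gamma w i j - gamma w j k := by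
  unfold V0
  rw [← Finset.sum_Ico_consecutive _ hij hjk]
  ring

lemma V0_add_V0_le (w : List ℕ) {i j k : ℕ} (hij : i ≤ j) (hjk : j ≤ k) :
    V0 w i j + V0 w j k ≤ V0 w i k := by
  linarith [V0_add_V0 w hij hjk, gamma_le_gamma_add_gamma w i j k]

lemma V0_le_V0_add_V0_add_one (w : List ℕ) {i j k : ℕ} (hij : i ≤ j) (hjk : j ≤ k) :
    V0 w i k ≤ V0 w i j + V0 w j k + 1 := by
  linarith [V0_add_V0 w hij hjk, gamma_add_gamma_le_gamma_add_one w i j k]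

theorem V0_is_admitted_general (n : ℕ) (w : List ℕ) :
    (∀ i, 1 ≤ i → i + 1 ≤ n → V0 w i (i + 1) = 0) ∧
    (∀ i j k, 1 ≤ i → i < j → j < k → k ≤ n →
      V0 w i j + V0 w j k ≤ V0 w i k ∧ V0 w i k ≤ V0 w i j + V0 w j k + 1) ∧
    (∀ i j, 1 ≤ i → i < j → j ≤ n → 0 ≤ V0 w i j) :=
  ⟨fun i _ _ => V0_self_succ w i,
    fun _ _ _ _ hij hjk _ =>
      ⟨V0_add_V0_le w hij.le hjk.le, V0_le_V0_add_V0_add_one w hij.le hjk.le⟩,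
    fun _ _ _ hij _ => V0_nonneg w hij.le⟩

theorem V0_is_admitted (n : ℕ) (w : List ℕ) (hperm : w.Perm (List.range' 1 n)) :
    (∀ i, 1 ≤ i → i + 1 ≤ n → V0 w i (i + 1) = 0) ∧
    (∀ i j k, 1 ≤ i → i < j → j < k → k ≤ n →
      V0 w i j + V0 w j k ≤ V0 w i k ∧ V0 w i k ≤ V0 w i j + V0 w j k + 1) ∧
    (∀ i j, 1 ≤ i → i < j → j ≤ n → 0 ≤ V0 w i j) :=
  V0_is_admitted_general n w
end

section
/- If w, w' ∈ S_n are conjugate words (w = xy, w' = yx), then V_0(w) = V_0(w'), where V_0(w) is defined by v_{ij} = −γ_{ij}(w) + Σ_{i≤k<j} γ_{k,k+1}(w). -/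
/-!
Passing from `x ++ y` to `y ++ x` moves every letter of `x` behind every letter of `y`, so
`γ_{ij}` changes only when `i` and `j` lie in different blocks, and then by `χ(j) - χ(i)`, where
`χ` is the indicator of the letters of `y`. In `V₀` the increments of the consecutive terms
`γ_{k,k+1}` telescope to `χ(j) - χ(i)`, which cancels the increment of `-γ_{ij}`.
-/

def memIndicator {α : Type*} [DecidableEq α] (l : List α) (a : α) : ℤ :=
  if a ∈ l then 1 else 0

lemma List.idxOf_append_comm_of_mem {α : Type*} [BEq α] [LawfulBEq α] {x y : List α} {a : α}
    (hdisj : x.Disjoint y) (ha : a ∈ x) :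
    (y ++ x).idxOf a = y.length + (x ++ y).idxOf a := by
  rw [List.idxOf_append_of_notMem fun h => hdisj ha h, List.idxOf_append_of_mem ha]

lemma gamma_append_comm {x y : List ℕ} (hdisj : x.Disjoint y) {i j : ℕ}
    (hi : i ∈ x ++ y) (hj : j ∈ x ++ y) :
    gamma (y ++ x) i j = gamma (x ++ y) i j + (memIndicator y j - memIndicator y i) := by
  have left {a} (ha : a ∈ x) : a ∉ y ∧ (x ++ y).idxOf a < x.length ∧
      (y ++ x).idxOf a = y.length + (x ++ y).idxOf a :=
    ⟨hdisj ha, List.idxOf_append_of_mem ha ▸ List.idxOf_lt_length_of_mem ha,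
      List.idxOf_append_comm_of_mem hdisj ha⟩
  have right {a} (ha : a ∈ y) : a ∈ y ∧ (y ++ x).idxOf a < y.length ∧
      (x ++ y).idxOf a = x.length + (y ++ x).idxOf a :=
    ⟨ha, List.idxOf_append_of_mem ha ▸ List.idxOf_lt_length_of_mem ha,
      List.idxOf_append_comm_of_mem hdisj.symm ha⟩
  unfold gamma memIndicator
  rcases List.mem_append.1 hi with hi | hi <;> rcases List.mem_append.1 hj with hj | hj
  all_goals
    first | obtain ⟨hi₁, hi₂, hi₃⟩ := left hi | obtain ⟨hi₁, hi₂, hi₃⟩ := right hi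
    first | obtain ⟨hj₁, hj₂, hj₃⟩ := left hj | obtain ⟨hj₁, hj₂, hj₃⟩ := right hj
    simp only [hi₁, hj₁, if_true, if_false]
    split_ifs <;> omega

lemma V0_append_comm {x y : List ℕ} (hdisj : x.Disjoint y) {i j : ℕ} (hij : i ≤ j)
    (hmem : ∀ k ∈ Finset.Icc i j, k ∈ x ++ y) :
    V0 (y ++ x) i j = V0 (x ++ y) i j := by
  have hγ {k l} (hk : k ∈ Finset.Icc i j) (hl : l ∈ Finset.Icc i j) :=
    gamma_append_comm hdisj (hmem k hk) (hmem l hl)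
  have hsum : ∑ k ∈ Finset.Ico i j, gamma (y ++ x) k (k + 1) =
      ∑ k ∈ Finset.Ico i j, gamma (x ++ y) k (k + 1) + (memIndicator y j - memIndicator y i) := by
    rw [← Finset.sum_Ico_sub _ hij, ← Finset.sum_add_distrib]
    refine Finset.sum_congr rfl fun k hk => ?_
    rw [Finset.mem_Ico] at hk
    exact hγ (Finset.mem_Icc.2 ⟨hk.1, hk.2.le⟩) (Finset.mem_Icc.2 ⟨by omega, hk.2⟩)
  rw [V0, V0, hsum, hγ (Finset.left_mem_Icc.2 hij) (Finset.right_mem_Icc.2 hij)]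
  ring

theorem V0_conjugation_invariant (n : ℕ) (x y : List ℕ)
    (hperm : (x ++ y).Perm (List.range' 1 n)) :
    ∀ i j, 1 ≤ i → i < j → j ≤ n → V0 (x ++ y) i j = V0 (y ++ x) i j := by
  intro i j hi hij hjn
  have hdisj : x.Disjoint y :=
    List.disjoint_of_nodup_append (hperm.nodup_iff.2 (List.nodup_range' ..))
  refine (V0_append_comm hdisj hij.le fun k hk => ?_).symm
  rw [Finset.mem_Icc] at hk
  rw [hperm.mem_iff, List.mem_range']
  exact ⟨k - 1, by omega, by omega⟩
end

section
/- If u and v are admitted vectors with u < v componentwise (u ≤ v and u ≠ v), then there exist indices 1 ≤ i < j ≤ n such that: δ_{ipj}(u) = 0 for all i < p < j, δ_{pij}(u) = 1 for all 1 ≤ p < i, and δ_{ijp}(u) = 1 for all j < p ≤ n. -/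
/-- A vector `v ∈ ℕ^T` (nonnegative on `T = {(i,j) : 1 ≤ i < j ≤ n}`) is admitted. -/
def IsAdmitted (n : ℕ) (v : ℕ → ℕ → ℤ) : Prop :=
  (∀ i j, 1 ≤ i → i < j → j ≤ n → 0 ≤ v i j) ∧
  (∀ i, 1 ≤ i → i + 1 ≤ n → v i (i + 1) = 0) ∧
  (∀ i j k, 1 ≤ i → i < j → j < k → k ≤ n →
    v i j + v j k ≤ v i k ∧ v i k ≤ v i j + v j k + 1)

/-- `δ_{ijk}(v) = v_{ik} − v_{ij} − v_{jk}`. -/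
def dlt (v : ℕ → ℕ → ℤ) (i j k : ℕ) : ℤ := v i k - v i j - v j k

theorem exists_increasable_pair (n : ℕ) (u v : ℕ → ℕ → ℤ)
    (hu : IsAdmitted n u) (hv : IsAdmitted n v)
    (hle : ∀ i j, 1 ≤ i → i < j → j ≤ n → u i j ≤ v i j)
    (hne : ∃ i j, 1 ≤ i ∧ i < j ∧ j ≤ n ∧ u i j < v i j) :
    ∃ i j, 1 ≤ i ∧ i < j ∧ j ≤ n ∧
      (∀ p, i < p → p < j → dlt u i p j = 0) ∧
      (∀ p, 1 ≤ p → p < i → dlt u p i j = 1) ∧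
      (∀ p, j < p → p ≤ n → dlt u i j p = 1) := by
  classical
  obtain ⟨i0, j0, hi0, hij0, hj0, _⟩ := hne
  obtain ⟨hpos, hzero, htri⟩ := hu
  -- bounds on δ
  have hδ : ∀ a b c, 1 ≤ a → a < b → b < c → c ≤ n →
      0 ≤ dlt u a b c ∧ dlt u a b c ≤ 1 := by
    intro a b c ha hab hbc hcn
    have h := htri a b c ha hab hbc hcn
    unfold dlt
    omega
  -- cocycle identity
  have hco : ∀ a b c d : ℕ,
      dlt u a b c + dlt u a c d = dlt u b c d + dlt u a b d := by
    intro a b c d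
    unfold dlt
    ring
  suffices H : ∀ d i j, j ≤ i + d → 1 ≤ i → i < j → j ≤ n →
      (∀ p, 1 ≤ p → p < i → dlt u p i j = 1) →
      (∀ p, j < p → p ≤ n → dlt u i j p = 1) →
      ∃ i' j', 1 ≤ i' ∧ i' < j' ∧ j' ≤ n ∧
        (∀ p, i' < p → p < j' → dlt u i' p j' = 0) ∧
        (∀ p, 1 ≤ p → p < i' → dlt u p i' j' = 1) ∧
        (∀ p, j' < p → p ≤ n → dlt u i' j' p = 1) by
    exact H n 1 n (by omega) le_rfl (by omega) le_rfl
      (fun p hp hpi => absurd hpi (by omega))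
      (fun p hp hpn => absurd hpn (by omega))
  intro d
  induction d with
  | zero =>
    intro i j hji hi hij hjn _ _
    exact absurd hji (by omega)
  | succ d ih =>
    intro i j hji hi hij hjn hleft hright
    by_cases hex : ∃ p, i < p ∧ p < j ∧ dlt u i p j = 1
    · -- take the greatest such p and recurse to (i, p)
      set P : ℕ → Prop := fun p => i < p ∧ p < j ∧ dlt u i p j = 1 with hPdef
      obtain ⟨p0, hp0⟩ := hex
      have hp0P : P p0 := hp0
      set p := Nat.findGreatest P j with hpdef
      have hP : P p := Nat.findGreatest_spec (le_of_lt hp0P.2.1) hp0P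
      obtain ⟨hip, hpj, hdpj⟩ := hP
      -- left outer condition for (i, p)
      have hL : ∀ q, 1 ≤ q → q < i → dlt u q i p = 1 := by
        intro q hq hqi
        have h1 := hco q i p j
        have h2 := hleft q hq hqi
        have h3 := hδ q i p hq hqi hip (by omega)
        have h4 := hδ q p j hq (by omega) hpj hjn
        omega
      -- right outer condition for (i, p)
      have hR : ∀ q, p < q → q ≤ n → dlt u i p q = 1 := by
        intro q hpq hqn
        rcases lt_trichotomy q j with hqj | hqj | hqj
        · -- i < p < q < j : use maximality of p
          have hnq : ¬ P q :=
            Nat.findGreatest_is_greatest hpq (le_of_lt hqj)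
          have hq0 : dlt u i q j = 0 := by
            have hb := hδ i q j hi (by omega) hqj hjn
            by_contra hne0
            exact hnq ⟨by omega, hqj, by omega⟩
          have h1 := hco i p q j
          have h2 := hδ i p q hi hip hpq (by omega)
          have h3 := hδ p q j (by omega) hpq hqj hjn
          omega
        · subst hqj; exact hdpj
        · -- q > j
          have h1 := hco i p j q
          have h2 := hright q hqj hqn
          have h3 := hδ i p q hi hip (by omega) hqn
          have h4 := hδ p j q (by omega) hpj hqj hqn
          omega
      exact ih i p (by omega) hi hip (by omega) hL hR
    · -- no middle point with δ = 1 : (i, j) works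
      push_neg at hex
      refine ⟨i, j, hi, hij, hjn, ?_, hleft, hright⟩
      intro q hiq hqj
      have hb := hδ i q j hi hiq hqj hjn
      have := hex q hiq hqj
      omega
end

section
/- Let w ∈ S_n viewed as a word and let 1 ≤ i < j ≤ n. Then ji is a factor of w (i.e., j immediately followed by i) if and only if: (i) γ_{ij}(w) = 1; (ii) γ_{ip}(w) + γ_{pj}(w) = 1 for all i < p < j; (iii) γ_{pi}(w) = γ_{pj}(w) for all 1 ≤ p < i; (iv) γ_{ip}(w) = γ_{jp}(w) for all j < p ≤ n. -/
namespace List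

variable {α : Type*} [BEq α] [LawfulBEq α] {l : List α} {a b : α}

theorem Nodup.idxOf_eq_of_getElem?_eq_some (hl : l.Nodup) {k : ℕ} (h : l[k]? = some a) :
    l.idxOf a = k := by
  obtain ⟨hk, rfl⟩ := getElem?_eq_some_iff.mp h
  exact hl.idxOf_getElem k hk

theorem Nodup.pair_infix_iff (hl : l.Nodup) (hb : b ∈ l) :
    [a, b] <:+: l ↔ l.idxOf b = l.idxOf a + 1 := by
  have hbl := idxOf_lt_length_iff.mpr hb
  rw [infix_iff_getElem?]
  constructor
  · rintro ⟨k, -, h⟩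
    have hka : l[k]? = some a := by simpa using h 0 (by simp)
    have hkb : l[k + 1]? = some b := by simpa [add_comm 1] using h 1 (by simp)
    rw [hl.idxOf_eq_of_getElem?_eq_some hka, hl.idxOf_eq_of_getElem?_eq_some hkb]
  · intro h
    have ha : a ∈ l := idxOf_lt_length_iff.mp (by omega)
    refine ⟨l.idxOf a, by simp; omega, fun i hi => ?_⟩
    match i, hi with
    | 0, _ => simpa using getElem?_idxOf ha
    | 1, _ => simpa [add_comm 1, ← h] using getElem?_idxOf hb

theorem Nodup.idxOf_eq_succ_iff (hl : l.Nodup) (hb : b ∈ l) :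
    l.idxOf b = l.idxOf a + 1 ↔
      l.idxOf a < l.idxOf b ∧ ∀ c ∈ l, ¬(l.idxOf a < l.idxOf c ∧ l.idxOf c < l.idxOf b) := by
  refine ⟨fun h => ⟨by omega, fun c _ => by omega⟩, fun ⟨hab, h⟩ => ?_⟩
  by_contra hne
  have hk : l.idxOf a + 1 < l.length := by have := idxOf_lt_length_iff.mpr hb; omega
  have := hl.idxOf_getElem _ hk
  exact h _ (getElem_mem hk) (by omega)

end List

section Gamma

variable {w : List ℕ} {i j p : ℕ}

theorem gamma_eq_one_iff : gamma w i j = 1 ↔ w.idxOf j < w.idxOf i := by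
  unfold gamma
  split_ifs <;> simp_all

theorem gamma_add_gamma_eq_one_iff (hji : w.idxOf j < w.idxOf i) :
    gamma w i p + gamma w p j = 1 ↔ ¬(w.idxOf j < w.idxOf p ∧ w.idxOf p < w.idxOf i) := by
  unfold gamma
  split_ifs <;> omega

theorem gamma_eq_gamma_left_iff (hji : w.idxOf j < w.idxOf i) (hpi : w.idxOf p ≠ w.idxOf i) :
    gamma w p i = gamma w p j ↔ ¬(w.idxOf j < w.idxOf p ∧ w.idxOf p < w.idxOf i) := by
  unfold gamma
  split_ifs <;> omega

theorem gamma_eq_gamma_right_iff (hji : w.idxOf j < w.idxOf i) (hpj : w.idxOf p ≠ w.idxOf j) :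
    gamma w i p = gamma w j p ↔ ¬(w.idxOf j < w.idxOf p ∧ w.idxOf p < w.idxOf i) := by
  unfold gamma
  split_ifs <;> omega

end Gamma

theorem factor_iff_gamma (n : ℕ) (w : List ℕ) (hperm : w.Perm (List.range' 1 n))
    (i j : ℕ) (hi : 1 ≤ i) (hij : i < j) (hj : j ≤ n) :
    [j, i] <:+: w ↔
      (gamma w i j = 1 ∧
       (∀ p, i < p → p < j → gamma w i p + gamma w p j = 1) ∧
       (∀ p, 1 ≤ p → p < i → gamma w p i = gamma w p j) ∧
       (∀ p, j < p → p ≤ n → gamma w i p = gamma w j p)) := by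
  have hnd : w.Nodup := hperm.nodup_iff.mpr (List.nodup_range' ..)
  have hmem (p : ℕ) : p ∈ w ↔ 1 ≤ p ∧ p ≤ n := by rw [hperm.mem_iff, List.mem_range'_1]; omega
  have hne (p q : ℕ) (h1 : 1 ≤ p) (hn : p ≤ n) (hpq : p ≠ q) : w.idxOf p ≠ w.idxOf q :=
    mt (List.idxOf_inj ((hmem p).mpr ⟨h1, hn⟩)).mp hpq
  have hiw : i ∈ w := (hmem i).mpr ⟨hi, by omega⟩
  rw [hnd.pair_infix_iff hiw, hnd.idxOf_eq_succ_iff hiw, gamma_eq_one_iff]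
  refine and_congr_right fun hji => ⟨fun hgap => ⟨?_, ?_, ?_⟩, fun ⟨hmid, hlow, hhigh⟩ => ?_⟩
  · exact fun p hip hpj => (gamma_add_gamma_eq_one_iff hji).mpr
      (hgap p ((hmem p).mpr ⟨by omega, by omega⟩))
  · exact fun p h1 hpi => (gamma_eq_gamma_left_iff hji (hne p i h1 (by omega) hpi.ne)).mpr
      (hgap p ((hmem p).mpr ⟨h1, by omega⟩))
  · exact fun p hjp hn => (gamma_eq_gamma_right_iff hji (hne p j (by omega) hn hjp.ne')).mpr
      (hgap p ((hmem p).mpr ⟨by omega, hn⟩))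
  · intro p hp hbetween
    obtain ⟨h1, hn⟩ := (hmem p).mp hp
    rcases lt_trichotomy p i with hpi | rfl | hip
    · exact (gamma_eq_gamma_left_iff hji (hne p i h1 hn hpi.ne)).mp (hlow p h1 hpi) hbetween
    · omega
    rcases lt_trichotomy p j with hpj | rfl | hjp
    · exact (gamma_add_gamma_eq_one_iff hji).mp (hmid p hip hpj) hbetween
    · omega
    · exact (gamma_eq_gamma_right_iff hji (hne p j h1 hn hjp.ne')).mp (hhigh p hjp hn) hbetween
end

section
/- The map u ↦ v defined by v_{ij} = j − i − 1 − u_{ij} maps admitted vectors to admitted vectors and is an order-reversing involution on the set of admitted vectors. -/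
/-- The map `u ↦ v` with `v_{ij} = j − i − 1 − u_{ij}`. -/
def antiInv (u : ℕ → ℕ → ℤ) (i j : ℕ) : ℤ := (j : ℤ) - (i : ℤ) - 1 - u i j

lemma admitted_upper {n : ℕ} {u : ℕ → ℕ → ℤ} (h : IsAdmitted n u) :
    ∀ j i, 1 ≤ i → i < j → j ≤ n → u i j ≤ (j : ℤ) - i - 1 := by
  obtain ⟨_, h0, ht⟩ := h
  intro j
  induction j with
  | zero => intro i _ hij _; omega
  | succ m ih =>
    intro i hi hij hjn
    rcases eq_or_lt_of_le (Nat.lt_succ_iff.mp hij) with h' | h'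
    · subst h'
      have := h0 i hi hjn
      push_cast; omega
    · have h1 := (ht i m (m+1) hi h' (Nat.lt_succ_self m) hjn).2
      have h2 := ih i hi h' (le_trans (Nat.le_succ m) hjn)
      have h3 := h0 m (le_trans hi (Nat.le_of_lt h')) hjn
      push_cast at *; omega

theorem antiInv_anti_automorphism (n : ℕ) :
    (∀ u, IsAdmitted n u → IsAdmitted n (antiInv u)) ∧
    (∀ u, IsAdmitted n u →
      ∀ i j, 1 ≤ i → i < j → j ≤ n → antiInv (antiInv u) i j = u i j) ∧
    (∀ u u', IsAdmitted n u → IsAdmitted n u' →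
      (∀ i j, 1 ≤ i → i < j → j ≤ n → u i j ≤ u' i j) →
      (∀ i j, 1 ≤ i → i < j → j ≤ n → antiInv u' i j ≤ antiInv u i j)) := by
  refine ⟨?_, ?_, ?_⟩
  · intro u hu
    obtain ⟨hnn, h0, ht⟩ := hu
    refine ⟨?_, ?_, ?_⟩
    · intro i j hi hij hjn
      have := admitted_upper ⟨hnn, h0, ht⟩ j i hi hij hjn
      simp only [antiInv]; omega
    · intro i hi hin
      have := h0 i hi hin
      simp only [antiInv]; push_cast; omega
    · intro i j k hi hij hjk hkn
      have := ht i j k hi hij hjk hkn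
      simp only [antiInv]; omega
  · intro u _ i j _ _ _
    simp only [antiInv]; ring
  · intro u u' _ _ hle i j hi hij hjn
    have := hle i j hi hij hjn
    simp only [antiInv]; omega
end

section
/- The map u ↦ v defined by v_{ij} = j − i − 1 − u_{n+1−j, n+1−i} maps admitted vectors to admitted vectors and is an order-reversing involution on the set of admitted vectors. -/
/-- The map `u ↦ v` with `v_{ij} = j − i − 1 − u_{n+1−j, n+1−i}`. -/
def antiConj (n : ℕ) (u : ℕ → ℕ → ℤ) (i j : ℕ) : ℤ :=
  (j : ℤ) - (i : ℤ) - 1 - u (n + 1 - j) (n + 1 - i)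

lemma admitted_upper_bound (n : ℕ) (u : ℕ → ℕ → ℤ) (h : IsAdmitted n u) :
    ∀ j i, 1 ≤ i → i < j → j ≤ n → u i j ≤ (j : ℤ) - i - 1 := by
  intro j
  induction j with
  | zero => intro i _ hij _; omega
  | succ m ih =>
    intro i hi hij hjn
    rcases eq_or_lt_of_le (Nat.lt_succ_iff.mp hij) with he | hlt
    · subst he
      rw [h.2.1 i hi hjn]
      push_cast; omega
    · have h1 := (h.2.2 i m (m + 1) hi hlt (Nat.lt_succ_self m) hjn).2
      have h2 := h.2.1 m (by omega) hjn
      have h3 := ih i hi hlt (by omega)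
      push_cast at *
      omega

theorem antiConj_anti_automorphism (n : ℕ) :
    (∀ u, IsAdmitted n u → IsAdmitted n (antiConj n u)) ∧
    (∀ u, IsAdmitted n u →
      ∀ i j, 1 ≤ i → i < j → j ≤ n → antiConj n (antiConj n u) i j = u i j) ∧
    (∀ u u', IsAdmitted n u → IsAdmitted n u' →
      (∀ i j, 1 ≤ i → i < j → j ≤ n → u i j ≤ u' i j) →
      (∀ i j, 1 ≤ i → i < j → j ≤ n → antiConj n u' i j ≤ antiConj n u i j)) := by
  refine ⟨?_, ?_, ?_⟩
  · intro u hu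
    refine ⟨?_, ?_, ?_⟩
    · intro i j hi hij hjn
      have hb := admitted_upper_bound n u hu (n + 1 - i) (n + 1 - j)
        (by omega) (by omega) (by omega)
      have c1 : ((n + 1 - i : ℕ) : ℤ) = (n : ℤ) + 1 - i := by
        push_cast [Nat.cast_sub (by omega : i ≤ n + 1)]; ring
      have c2 : ((n + 1 - j : ℕ) : ℤ) = (n : ℤ) + 1 - j := by
        push_cast [Nat.cast_sub (by omega : j ≤ n + 1)]; ring
      simp only [antiConj]
      omega
    · intro i hi hin
      have hz := hu.2.1 (n - i) (by omega) (by omega)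
      have he : n + 1 - (i + 1) = n - i := by omega
      have he2 : n + 1 - i = n - i + 1 := by omega
      simp only [antiConj, he, he2, hz]
      push_cast; ring
    · intro i j k hi hij hjk hkn
      have ht := hu.2.2 (n + 1 - k) (n + 1 - j) (n + 1 - i)
        (by omega) (by omega) (by omega) (by omega)
      simp only [antiConj]
      constructor <;> [linarith [ht.2]; linarith [ht.1]]
  · intro u hu i j hi hij hjn
    have e1 : n + 1 - (n + 1 - j) = j := by omega
    have e2 : n + 1 - (n + 1 - i) = i := by omega
    have c1 : ((n + 1 - i : ℕ) : ℤ) = (n : ℤ) + 1 - i := by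
      push_cast [Nat.cast_sub (by omega : i ≤ n + 1)]; ring
    have c2 : ((n + 1 - j : ℕ) : ℤ) = (n : ℤ) + 1 - j := by
      push_cast [Nat.cast_sub (by omega : j ≤ n + 1)]; ring
    simp only [antiConj, e1, e2, c1, c2]
    ring
  · intro u u' hu hu' hle i j hi hij hjn
    have := hle (n + 1 - j) (n + 1 - i) (by omega) (by omega) (by omega)
    simp only [antiConj]
    linarith
end

section
/- The vector w with components w_{ij} = j − i − 1 is an admitted vector, it is the unique maximum of the poset of admitted vectors (every admitted vector v satisfies v_{ij} ≤ j − i − 1 for all i < j), and δ_{ijk}(w) = 1 for all i < j < k. Additionally, the zero vector is admitted and is the minimum. -/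
/-- The top vector `w_{ij} = j − i − 1`. -/
def topVec (i j : ℕ) : ℤ := (j : ℤ) - (i : ℤ) - 1

theorem topVec_max_and_zero_min (n : ℕ) :
    IsAdmitted n topVec ∧
    (∀ v, IsAdmitted n v → ∀ i j, 1 ≤ i → i < j → j ≤ n → v i j ≤ topVec i j) ∧
    (∀ i j k, 1 ≤ i → i < j → j < k → k ≤ n → dlt topVec i j k = 1) ∧
    IsAdmitted n (fun _ _ => (0 : ℤ)) ∧
    (∀ v, IsAdmitted n v → ∀ i j, 1 ≤ i → i < j → j ≤ n → (0 : ℤ) ≤ v i j) := by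
  refine ⟨⟨?_, ?_, ?_⟩, ?_, ?_, ⟨?_, ?_, ?_⟩, ?_⟩
  · intro i j h1 h2 h3; simp [topVec]; omega
  · intro i h1 h2; simp [topVec]
  · intro i j k h1 h2 h3 h4; simp [topVec]; omega
  · intro v hv i j h1 h2 h3
    obtain ⟨hpos, hzero, htri⟩ := hv
    induction j with
    | zero => omega
    | succ m ih =>
      rcases eq_or_lt_of_le (Nat.succ_le_of_lt h2) with he | hlt
      · have : v i (i+1) = 0 := hzero i h1 (by omega)
        simp [topVec, ← he, this]
      · have him : i < m := by omega
        have h1' := ih him (by omega)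
        have h2' := (htri i m (m+1) h1 him (by omega) h3).2
        have h3' := hzero m (by omega) h3
        simp only [topVec] at *
        push_cast at *
        omega
  · intro i j k h1 h2 h3 h4; simp [dlt, topVec]
  · intro i j h1 h2 h3; simp
  · intro i h1 h2; simp
  · intro i j k h1 h2 h3 h4; simp
  · intro v hv i j h1 h2 h3; exact hv.1 i j h1 h2 h3
end

section
/- Suppose v ∈ ℕ^T satisfies the admissibility conditions for all components v_{ik} with k − i < n − 1 (i.e., v_{i,i+1} = 0 and v_{ij} + v_{jk} ≤ v_{ik} ≤ v_{ij} + v_{jk} + 1 whenever k − i < n − 1). Then the numbers v_{1i} + v_{in}, for i = 2, ..., n−1, take at most two values, and these values are consecutive integers. -/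
theorem two_consecutive_values (n : ℕ) (v : ℕ → ℕ → ℤ)
    (hnonneg : ∀ i j, 1 ≤ i → i < j → j ≤ n → 0 ≤ v i j)
    (hadm : ∀ i k, 1 ≤ i → i < k → k ≤ n → k - i < n - 1 →
      (k = i + 1 → v i k = 0) ∧
      (∀ j, i < j → j < k → v i j + v j k ≤ v i k ∧ v i k ≤ v i j + v j k + 1)) :
    ∃ a : ℤ, ∀ i, 2 ≤ i → i ≤ n - 1 →
      v 1 i + v i n = a ∨ v 1 i + v i n = a + 1 := by
  set s : ℕ → ℤ := fun i => v 1 i + v i n with hs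
  have key : ∀ i j, 2 ≤ i → i < j → j ≤ n - 1 →
      s j - s i ≤ 1 ∧ s i - s j ≤ 1 := by
    intro i j hi hij hj
    have hn3 : 3 ≤ n := by omega
    have h1 := (hadm 1 j (by omega) (by omega) (by omega) (by omega)).2 i
      (by omega) (by omega)
    have h2 := (hadm i n (by omega) (by omega) le_rfl (by omega)).2 j
      (by omega) (by omega)
    simp only [hs]
    omega
  by_cases hne : (Finset.Icc 2 (n - 1)).Nonempty
  · have hne' : ((Finset.Icc 2 (n - 1)).image s).Nonempty := hne.image s
    refine ⟨((Finset.Icc 2 (n - 1)).image s).min' hne', ?_⟩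
    intro i hi hin
    have hiS : i ∈ Finset.Icc 2 (n - 1) := Finset.mem_Icc.2 ⟨hi, hin⟩
    have hle : ((Finset.Icc 2 (n - 1)).image s).min' hne' ≤ s i :=
      Finset.min'_le _ _ (Finset.mem_image_of_mem s hiS)
    obtain ⟨i0, hi0S, hi0⟩ := Finset.mem_image.1
      (Finset.min'_mem ((Finset.Icc 2 (n - 1)).image s) hne')
    rw [Finset.mem_Icc] at hi0S
    have hdiff : s i - s i0 ≤ 1 := by
      rcases lt_trichotomy i i0 with h | h | h
      · exact (key i i0 hi h hi0S.2).2
      · subst h; omega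
      · exact (key i0 i hi0S.1 h hin).1
    rw [← hi0] at hle ⊢
    simp only [hs] at hle hdiff ⊢
    omega
  · exact ⟨0, fun i hi hin => absurd (Finset.mem_Icc.2 ⟨hi, hin⟩) (fun h => hne ⟨i, h⟩)⟩
end

section
/- The number c(n,k) of circular permutations (n+1-cycles) in S_{n+1} having exactly k large circular descents equals the Eulerian number a(n,k), the number of permutations of S_n with k descents. -/
/-!
In cycle notation, inserting the new largest letter immediately before a letter `a` of a circular
permutation of `n + 1` letters yields every circular permutation of `n + 2` letters exactly once.
The new letter is never a large descent, and `a` becomes one unless it already was one or is the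
largest old letter; all other letters keep their predecessors. So a circular permutation with `j`
large descents has `j + 1` insertions keeping `j` of them and `n - j` raising the count to `j + 1`,
which is the recurrence of the Eulerian numbers.
-/

/-- Eulerian numbers: `a(n,k) = (k+1)a(n−1,k) + (n−k)a(n−1,k−1)`,
with `a(0,k) = 0` for `k ≥ 1` and `a(n,0) = 1`. -/
def eulerian : ℕ → ℕ → ℕ
  | 0, 0 => 1
  | 0, _ + 1 => 0
  | _ + 1, 0 => 1
  | n + 1, k + 1 => (k + 2) * eulerian n (k + 1) + (n + 1 - (k + 1)) * eulerian n k

/-- The number of large circular descents of a permutation `σ`: the number of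
letters `b` whose cyclic predecessor `a = σ⁻¹ b` satisfies `a > b + 1`. -/
def numLCD {m : ℕ} (σ : Equiv.Perm (Fin m)) : ℕ :=
  (Finset.univ.filter (fun b : Fin m => ((σ⁻¹ b : Fin m) : ℕ) > (b : ℕ) + 1)).card

open Equiv (Perm)
open Equiv.Perm Finset

namespace Equiv.Perm

theorem SameCycle.rel_of_forall_rel_apply {α : Type*} [Finite α] {f : Perm α}
    {r : α → α → Prop} (hrefl : ∀ x, r x x) (htrans : ∀ {x y z}, r x y → r y z → r x z)
    (hstep : ∀ x, r x (f x)) {x y : α} (hxy : f.SameCycle x y) : r x y := by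
  obtain ⟨m, rfl⟩ := hxy.exists_nat_pow_eq
  clear hxy
  induction m with
  | zero => exact hrefl x
  | succ m ih => rw [pow_succ', mul_apply]; exact htrans ih (hstep _)

theorem isCycleOn_univ_iff {α : Type*} {f : Perm α} :
    f.IsCycleOn .univ ↔ ∀ x y, f.SameCycle x y := by
  simp [IsCycleOn, f.bijective.bijOn_univ]

variable {n : ℕ}

def decomposeFinLast : Perm (Fin (n + 1)) ≃ Option (Fin n) × Perm (Fin n) :=
  (permCongr finSuccEquivLast).trans decomposeOption

/-- In cycle notation, `insertLast σ a` is `σ` with the new letter `Fin.last n` inserted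
immediately before `a`. -/
def insertLast (σ : Perm (Fin n)) (a : Fin n) : Perm (Fin (n + 1)) :=
  decomposeFinLast.symm (some a, σ)

theorem decomposeFinLast_symm_some (σ : Perm (Fin n)) (a : Fin n) :
    decomposeFinLast.symm (some a, σ) = insertLast σ a :=
  rfl

theorem insertLast_last (σ : Perm (Fin n)) (a : Fin n) :
    insertLast σ a (Fin.last n) = a.castSucc := by
  simp [insertLast, decomposeFinLast, permCongr_apply]

theorem insertLast_castSucc (σ : Perm (Fin n)) (a x : Fin n) :
    insertLast σ a x.castSucc = if σ x = a then Fin.last n else (σ x).castSucc := by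
  simp only [insertLast, decomposeFinLast, symm_trans_apply, decomposeOption_symm_apply,
    permCongr_symm_apply, mul_apply, finSuccEquivLast_castSucc, optionCongr_apply,
    Option.map_some, swap_apply_def]
  split_ifs <;> simp_all

theorem insertLast_inv_last (σ : Perm (Fin n)) (a : Fin n) :
    (insertLast σ a)⁻¹ (Fin.last n) = (σ⁻¹ a).castSucc := by
  rw [inv_eq_iff_eq, insertLast_castSucc]
  simp

theorem insertLast_inv_castSucc (σ : Perm (Fin n)) (a x : Fin n) :
    (insertLast σ a)⁻¹ x.castSucc = if x = a then Fin.last n else (σ⁻¹ x).castSucc := by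
  split_ifs with h
  · rw [inv_eq_iff_eq, insertLast_last, h]
  · rw [inv_eq_iff_eq, insertLast_castSucc]
    simp [h]

theorem decomposeFinLast_symm_none_last (σ : Perm (Fin n)) :
    decomposeFinLast.symm (none, σ) (Fin.last n) = Fin.last n := by
  simp [decomposeFinLast, permCongr_apply]

theorem sameCycle_insertLast_castSucc_iff {σ : Perm (Fin n)} {a x y : Fin n} :
    (insertLast σ a).SameCycle x.castSucc y.castSucc ↔ σ.SameCycle x y := by
  set τ := insertLast σ a
  constructor
  · -- read `last n` as the letter `a` it was inserted before
    let proj : Fin (n + 1) → Fin n := Fin.lastCases a id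
    have hproj (z : Fin n) : proj z.castSucc = z := Fin.lastCases_castSucc z
    have hstep (z : Fin (n + 1)) : σ.SameCycle (proj z) (proj (τ z)) := by
      induction z using Fin.lastCases with
      | last => simpa [proj, τ, insertLast_last] using .refl _ _
      | cast z =>
        have hτz : proj (τ z.castSucc) = σ z := by
          rw [insertLast_castSucc]
          split_ifs with hz <;> simp [proj, hz]
        rw [hproj, hτz]
        exact sameCycle_apply_right.2 (.refl _ _)
    intro h
    simpa [hproj] using SameCycle.rel_of_forall_rel_apply
      (r := fun z w => σ.SameCycle (proj z) (proj w)) (fun _ => .refl _ _) .trans hstep h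
  · refine SameCycle.rel_of_forall_rel_apply
      (r := fun z w : Fin n => τ.SameCycle z.castSucc w.castSucc) (fun _ => .refl _ _) .trans
      fun z => ?_
    by_cases hz : σ z = a
    · have : τ (τ z.castSucc) = (σ z).castSucc := by
        rw [insertLast_castSucc, if_pos hz, insertLast_last, hz]
      rw [← this]
      exact sameCycle_apply_right.2 (sameCycle_apply_right.2 (.refl _ _))
    · have : τ z.castSucc = (σ z).castSucc := by rw [insertLast_castSucc, if_neg hz]
      rw [← this]
      exact sameCycle_apply_right.2 (.refl _ _)

theorem isCycleOn_univ_insertLast_iff {σ : Perm (Fin n)} {a : Fin n} :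
    (insertLast σ a).IsCycleOn .univ ↔ σ.IsCycleOn .univ := by
  simp only [isCycleOn_univ_iff]
  refine ⟨fun h x y => sameCycle_insertLast_castSucc_iff.1 (h _ _), fun h => ?_⟩
  have key (z : Fin (n + 1)) : (insertLast σ a).SameCycle z a.castSucc := by
    induction z using Fin.lastCases with
    | last =>
      rw [← insertLast_last σ a]
      exact sameCycle_apply_right.2 (.refl _ _)
    | cast z => exact sameCycle_insertLast_castSucc_iff.2 (h z a)
  exact fun z w => (key z).trans (key w).symm

end Equiv.Perm

theorem numLCD_eq_sum {n : ℕ} (σ : Perm (Fin n)) :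
    numLCD σ = ∑ b : Fin n, if (b : ℕ) + 1 < σ⁻¹ b then 1 else 0 := by
  rw [numLCD, card_filter]

theorem numLCD_insertLast_add {n : ℕ} (σ : Perm (Fin n)) (a : Fin n) :
    numLCD (insertLast σ a) + (if (a : ℕ) + 1 < σ⁻¹ a then 1 else 0) =
      numLCD σ + (if (a : ℕ) + 1 < n then 1 else 0) := by
  have hlast : ¬ (Fin.last n : ℕ) + 1 < (insertLast σ a)⁻¹ (Fin.last n) := by
    rw [insertLast_inv_last, Fin.val_castSucc, Fin.val_last]; omega
  have hrest : ∀ x ∈ univ.erase a,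
      (if (x.castSucc : ℕ) + 1 < (insertLast σ a)⁻¹ x.castSucc then 1 else 0) =
        if (x : ℕ) + 1 < σ⁻¹ x then 1 else 0 := fun x hx => by
    rw [insertLast_inv_castSucc, if_neg (ne_of_mem_erase hx), Fin.val_castSucc, Fin.val_castSucc]
  rw [numLCD_eq_sum, numLCD_eq_sum, Fin.sum_univ_castSucc, if_neg hlast, add_zero,
    ← add_sum_erase _ _ (mem_univ a), ← add_sum_erase _ _ (mem_univ a), sum_congr rfl hrest,
    insertLast_inv_castSucc, if_pos rfl, Fin.val_last, Fin.val_castSucc]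
  ring

theorem card_filter_numLCD_insertLast {n : ℕ} (σ : Perm (Fin (n + 1))) (k : ℕ) :
    #{a | numLCD (insertLast σ a) = k} =
      (if numLCD σ = k then k + 1 else 0) + (if numLCD σ + 1 = k then n + 1 - k else 0) := by
  set N : Finset (Fin (n + 1)) := {a | (a : ℕ) + 1 < σ⁻¹ a ∨ a = Fin.last n}
  have hN : #N = numLCD σ + 1 := by
    have : N = insert (Fin.last n) ({a | (a : ℕ) + 1 < σ⁻¹ a} : Finset (Fin (n + 1))) := by
      ext a; simp only [N, mem_filter, mem_insert, mem_univ, true_and]; tauto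
    rw [this, card_insert_of_notMem, numLCD]
    simp only [mem_filter, mem_univ, true_and, Fin.val_last, not_lt]
    exact (σ⁻¹ (Fin.last n)).is_le.trans (Nat.le_succ n)
  have hins (a : Fin (n + 1)) :
      numLCD (insertLast σ a) = if a ∈ N then numLCD σ else numLCD σ + 1 := by
    have h := numLCD_insertLast_add σ a
    have hlt : (a : ℕ) + 1 < n + 1 ↔ a ≠ Fin.last n := by
      rw [Ne, Fin.ext_iff, Fin.val_last]; omega
    have : (a : ℕ) + 1 < σ⁻¹ a → (a : ℕ) + 1 < n + 1 := fun h => h.trans (σ⁻¹ a).is_lt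
    simp only [N, mem_filter, mem_univ, true_and]
    split_ifs at h ⊢ <;> simp_all <;> omega
  split_ifs with h1 h2 h2
  · omega
  · rw [add_zero, ← h1, ← hN]; congr 1; ext a; simp [hins]
  · have : ({a | numLCD (insertLast σ a) = k} : Finset _) = Nᶜ := by ext a; simp [hins, ← h2]
    rw [zero_add, this, card_compl, Fintype.card_fin, hN, ← h2]
  · rw [add_zero, card_eq_zero, filter_eq_empty_iff]
    intro a _
    rw [hins]; split_ifs <;> omega

open scoped Classical in
theorem card_isCycleOn_numLCD_succ (n k : ℕ) :
    #{τ : Perm (Fin (n + 2)) | τ.IsCycleOn Set.univ ∧ numLCD τ = k} =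
      (k + 1) * #{σ : Perm (Fin (n + 1)) | σ.IsCycleOn Set.univ ∧ numLCD σ = k} +
        (n + 1 - k) * #{σ : Perm (Fin (n + 1)) | σ.IsCycleOn Set.univ ∧ numLCD σ + 1 = k} := by
  have hnone (σ : Perm (Fin (n + 1))) :
      ¬ (decomposeFinLast.symm (none, σ)).IsCycleOn Set.univ := fun h =>
    h.apply_ne Set.nontrivial_univ (Set.mem_univ _) (decomposeFinLast_symm_none_last σ)
  calc #{τ : Perm (Fin (n + 2)) | τ.IsCycleOn Set.univ ∧ numLCD τ = k}
      = ∑ σ ∈ {σ : Perm (Fin (n + 1)) | σ.IsCycleOn Set.univ},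
          #{a | numLCD (insertLast σ a) = k} := by
        rw [card_filter, ← decomposeFinLast.symm.sum_comp, Fintype.sum_prod_type,
          Fintype.sum_option, sum_comm]
        simp only [hnone, false_and, if_false, sum_const_zero, zero_add, sum_filter]
        refine sum_congr rfl fun σ _ => ?_
        simp only [decomposeFinLast_symm_some, isCycleOn_univ_insertLast_iff]
        split_ifs with hσ <;> simp [hσ]
    _ = _ := by
        simp only [card_filter_numLCD_insertLast, sum_add_distrib, ← sum_filter, sum_const,
          smul_eq_mul, filter_filter]
        ring

theorem eulerian_zero_right (n : ℕ) : eulerian n 0 = 1 := by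
  cases n <;> rfl

open scoped Classical in
theorem card_isCycleOn_numLCD_zero (k : ℕ) :
    #{σ : Perm (Fin 1) | σ.IsCycleOn Set.univ ∧ numLCD σ = k} = if k = 0 then 1 else 0 := by
  have h (σ : Perm (Fin 1)) : σ.IsCycleOn Set.univ ∧ numLCD σ = 0 :=
    ⟨isCycleOn_of_subsingleton _ _, by simp [numLCD]⟩
  split_ifs with hk <;> simp [h, hk, eq_comm]

theorem circular_descents_eulerian (n k : ℕ) :
    Nat.card {σ : Equiv.Perm (Fin (n + 1)) //
      σ.IsCycleOn (Set.univ : Set (Fin (n + 1))) ∧ numLCD σ = k} = eulerian n k := by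
  classical
  rw [Nat.card_eq_fintype_card, Fintype.card_subtype]
  induction n generalizing k with
  | zero => rw [card_isCycleOn_numLCD_zero]; cases k <;> rfl
  | succ n ih =>
    rw [card_isCycleOn_numLCD_succ]
    cases k with
    | zero => simp [ih, eulerian_zero_right]
    | succ k => simp [ih, eulerian]
end

section
/- The assignment v ↦ (δ_{ijk}(v))_{1≤i<j<k≤n} is a bijection from the set of admitted vectors onto the set of {0,1}-valued sequences (a_{ijk})_{1≤i<j<k≤n} satisfying a_{ijk} + a_{ikl} = a_{ijl} + a_{jkl} for all i < j < k < l. -/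
/-- `v ↦ (δ_{ijk}(v))` is a bijection from admitted vectors onto the `{0,1}`-valued
sequences satisfying `a_{ijk} + a_{ikl} = a_{ijl} + a_{jkl}`: injectivity on the
components of `T`, plus surjectivity. -/
theorem delta_bijection (n : ℕ) :
    (∀ u v : ℕ → ℕ → ℤ, IsAdmitted n u → IsAdmitted n v →
      (∀ i j k, 1 ≤ i → i < j → j < k → k ≤ n → dlt u i j k = dlt v i j k) →
      (∀ i j, 1 ≤ i → i < j → j ≤ n → u i j = v i j)) ∧
    (∀ a : ℕ → ℕ → ℕ → ℤ,
      (∀ i j k, 1 ≤ i → i < j → j < k → k ≤ n → a i j k = 0 ∨ a i j k = 1) →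
      (∀ i j k l, 1 ≤ i → i < j → j < k → k < l → l ≤ n →
        a i j k + a i k l = a i j l + a j k l) →
      ∃ v : ℕ → ℕ → ℤ, IsAdmitted n v ∧
        ∀ i j k, 1 ≤ i → i < j → j < k → k ≤ n → dlt v i j k = a i j k) := by
  constructor
  · rintro u v ⟨_, huz, _⟩ ⟨_, hvz, _⟩ hd
    have key : ∀ d i j, j - i = d → 1 ≤ i → i < j → j ≤ n → u i j = v i j := by
      intro d
      induction d using Nat.strong_induction_on with
      | _ d ih =>
        intro i j hdiff hi hij hjn
        rcases eq_or_lt_of_le (Nat.succ_le_of_lt hij) with h | h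
        · rw [← h, huz i hi (by omega), hvz i hi (by omega)]
        · -- i + 1 < j
          have h1 : 1 ≤ i + 1 := by omega
          have hrec : u (i+1) j = v (i+1) j := by
            apply ih (j - (i+1)) (by omega) (i+1) j rfl h1 h hjn
          have hd' := hd i (i+1) j hi (by omega) h hjn
          have hu := huz i hi (by omega)
          have hv := hvz i hi (by omega)
          simp only [dlt, hu, hv, hrec] at hd'
          linarith
    intro i j hi hij hjn
    exact key (j - i) i j rfl hi hij hjn
  · intro a h01 hcoc
    set v : ℕ → ℕ → ℤ := fun i j => ∑ t ∈ Finset.Ico (i+1) j, a i t (t+1) with hv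
    have hdlt : ∀ i j k, 1 ≤ i → i < j → j < k → k ≤ n → dlt v i j k = a i j k := by
      intro i j k hi hij hjk
      have hk : j + 1 ≤ k := hjk
      induction k, hk using Nat.le_induction with
      | base =>
        intro hkn
        simp only [dlt, hv]
        rw [← Finset.sum_Ico_consecutive (fun t => a i t (t+1)) (by omega : i+1 ≤ j)
          (by omega : j ≤ j+1)]
        rw [Finset.sum_Ico_succ_top (le_refl j), Finset.Ico_self, Finset.Ico_self]
        simp
      | succ k hk ihk =>
        intro hkn
        have ih := ihk (by omega) (by omega)
        have hc := hcoc i j k (k+1) hi hij (by omega) (by omega) hkn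
        simp only [dlt, hv] at ih ⊢
        rw [Finset.sum_Ico_succ_top (by omega : i+1 ≤ k),
          Finset.sum_Ico_succ_top (by omega : j+1 ≤ k)]
        linarith
    have h01' : ∀ i j k, 1 ≤ i → i < j → j < k → k ≤ n → 0 ≤ a i j k ∧ a i j k ≤ 1 := by
      intro i j k hi hij hjk hkn
      rcases h01 i j k hi hij hjk hkn with h | h <;> simp [h]
    refine ⟨v, ⟨?_, ?_, ?_⟩, hdlt⟩
    · intro i j hi hij hjn
      apply Finset.sum_nonneg
      intro t ht
      simp only [Finset.mem_Ico] at ht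
      exact (h01' i t (t+1) hi (by omega) (by omega) (by omega)).1
    · intro i hi hin
      simp [hv]
    · intro i j k hi hij hjk hkn
      have := hdlt i j k hi hij hjk hkn
      have hb := h01' i j k hi hij hjk hkn
      simp only [dlt] at this
      constructor <;> linarith
end

section
/- Let f = [a_1,...,a_n] be an affine permutation in the affine symmetric group S̃_n (so the a_i are pairwise incongruent mod n and sum to n(n+1)/2). Then for every i, a_i = i − Σ_{i<p≤n} ⌊(a_p − a_i)/n⌋ + Σ_{1≤p<i} ⌊(a_i − a_p)/n⌋. -/
/-!
Fix `i`. The differences `a p - a i`, `1 ≤ p ≤ n`, form a complete residue system modulo `n`,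
so their remainders sum to `n(n-1)/2`; together with `∑ p, a p = n(n+1)/2` this gives
`∑ p, ⌊(a p - a i)/n⌋ = 1 - a i`. For `p < i` the difference is not a multiple of `n`, so
`⌊(a i - a p)/n⌋ = -⌊(a p - a i)/n⌋ - 1`, and these `i - 1` corrections turn the sum into the
formula.
-/

open Finset

theorem Int.neg_ediv_of_not_dvd {a b : ℤ} (hb : 0 < b) (h : ¬ b ∣ a) : -a / b = -(a / b) - 1 := by
  rw [Int.neg_ediv, if_neg h, Int.sign_eq_one_of_pos hb]

section CompleteResidueSystem

variable {ι : Type*} {s : Finset ι} {f : ι → ℤ} {n : ℕ}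

theorem injOn_toNat_emod (hn : 0 < n) (hinj : ∀ p ∈ s, ∀ q ∈ s, (n : ℤ) ∣ f p - f q → p = q) :
    Set.InjOn (fun p ↦ (f p % n).toNat) s := by
  intro p hp q hq hpq
  have := Int.emod_nonneg (f p) (by omega : (n : ℤ) ≠ 0)
  have := Int.emod_nonneg (f q) (by omega : (n : ℤ) ≠ 0)
  exact hinj p hp q hq (Int.ModEq.dvd (show f q % n = f p % n by simp only at hpq; omega))

theorem image_toNat_emod_eq_range (hn : 0 < n) (hcard : #s = n)
    (hinj : ∀ p ∈ s, ∀ q ∈ s, (n : ℤ) ∣ f p - f q → p = q) :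
    s.image (fun p ↦ (f p % n).toNat) = range n := by
  refine eq_of_subset_of_card_le (fun k hk ↦ ?_) ?_
  · obtain ⟨p, -, rfl⟩ := mem_image.1 hk
    have := Int.emod_lt_of_pos (f p) (by omega : (0 : ℤ) < n)
    simp only [mem_range]
    omega
  · rw [card_image_of_injOn (injOn_toNat_emod hn hinj), card_range, hcard]

theorem two_mul_sum_emod_eq (hcard : #s = n)
    (hinj : ∀ p ∈ s, ∀ q ∈ s, (n : ℤ) ∣ f p - f q → p = q) :
    2 * ∑ p ∈ s, f p % n = n * (n - 1) := by
  rcases Nat.eq_zero_or_pos n with rfl | hn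
  · simp_all
  have hgauss := congrArg (Nat.cast : ℕ → ℤ) (sum_range_id_mul_two n)
  push_cast [Nat.cast_sub hn] at hgauss
  calc 2 * ∑ p ∈ s, f p % n = 2 * ∑ p ∈ s, (((f p % n).toNat : ℕ) : ℤ) := by
        congr 1
        refine sum_congr rfl fun p _ ↦ (Int.toNat_of_nonneg (Int.emod_nonneg _ ?_)).symm
        omega
    _ = 2 * ∑ k ∈ range n, (k : ℤ) := by
        rw [← image_toNat_emod_eq_range hn hcard hinj, sum_image (injOn_toNat_emod hn hinj)]
    _ = n * (n - 1) := by linarith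

theorem mul_two_mul_sum_ediv_eq (hcard : #s = n)
    (hinj : ∀ p ∈ s, ∀ q ∈ s, (n : ℤ) ∣ f p - f q → p = q) :
    n * (2 * ∑ p ∈ s, f p / n) = 2 * ∑ p ∈ s, f p - n * (n - 1) := by
  rw [← two_mul_sum_emod_eq hcard hinj]
  simp only [Int.emod_def, sum_sub_distrib, ← mul_sum]
  ring

end CompleteResidueSystem

section Window

variable {n : ℕ} {a : ℕ → ℤ}

theorem eq_of_dvd_sub_of_incongruent
    (hincong : ∀ i j, 1 ≤ i → i < j → j ≤ n → ¬ ((n : ℤ) ∣ (a i - a j))) :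
    ∀ p ∈ Icc 1 n, ∀ q ∈ Icc 1 n, (n : ℤ) ∣ a p - a q → p = q := by
  intro p hp q hq hdvd
  simp only [mem_Icc] at hp hq
  by_contra hne
  rcases lt_or_gt_of_ne hne with hpq | hqp
  · exact hincong p q hp.1 hpq hq.2 hdvd
  · exact hincong q p hq.1 hqp hp.2 (dvd_sub_comm.1 hdvd)

theorem sum_Icc_ediv_sub_eq
    (hincong : ∀ i j, 1 ≤ i → i < j → j ≤ n → ¬ ((n : ℤ) ∣ (a i - a j)))
    (hsum : 2 * ∑ i ∈ Icc 1 n, a i = (n : ℤ) * ((n : ℤ) + 1)) {i : ℕ} (hi : i ∈ Icc 1 n) :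
    ∑ p ∈ Icc 1 n, (a p - a i) / n = 1 - a i := by
  have hn : (n : ℤ) ≠ 0 := by simp only [mem_Icc] at hi; omega
  have hinj : ∀ p ∈ Icc 1 n, ∀ q ∈ Icc 1 n, (n : ℤ) ∣ (a p - a i) - (a q - a i) → p = q := by
    simpa only [sub_sub_sub_cancel_right] using eq_of_dvd_sub_of_incongruent hincong
  have key := mul_two_mul_sum_ediv_eq (Nat.card_Icc 1 n) hinj
  rw [sum_sub_distrib, sum_const, Nat.card_Icc, nsmul_eq_mul, Nat.add_sub_cancel] at key
  have : (n : ℤ) * (2 * ∑ p ∈ Icc 1 n, (a p - a i) / n) = n * (2 * (1 - a i)) := by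
    rw [key]; linear_combination hsum
  linarith [mul_left_cancel₀ hn this]

end Window

theorem affine_window_formula_general (n : ℕ) (a : ℕ → ℤ)
    (hincong : ∀ i j, 1 ≤ i → i < j → j ≤ n → ¬ ((n : ℤ) ∣ (a i - a j)))
    (hsum : 2 * ∑ i ∈ Finset.Icc 1 n, a i = (n : ℤ) * ((n : ℤ) + 1)) :
    ∀ i, 1 ≤ i → i ≤ n →
      a i = (i : ℤ) - (∑ p ∈ Finset.Ioc i n, Int.fdiv (a p - a i) (n : ℤ))
              + ∑ p ∈ Finset.Ico 1 i, Int.fdiv (a i - a p) (n : ℤ) := by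
  intro i hi1 hin
  have hi : i ∈ Icc 1 n := mem_Icc.2 ⟨hi1, hin⟩
  have hn : (0 : ℤ) < n := by omega
  have hsplit : Icc 1 n = insert i (Ico 1 i ∪ Ioc i n) := by
    ext p; simp only [mem_Icc, mem_insert, mem_union, mem_Ico, mem_Ioc]; omega
  have hdisj : Disjoint (Ico 1 i) (Ioc i n) :=
    disjoint_left.2 fun p hp hp' ↦ by simp only [mem_Ico, mem_Ioc] at hp hp'; omega
  have hlower : ∀ p ∈ Ico 1 i, (a i - a p) / n = -((a p - a i) / n) - 1 := fun p hp ↦ by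
    obtain ⟨hp1, hpi⟩ := mem_Ico.1 hp
    rw [← neg_sub, Int.neg_ediv_of_not_dvd hn]
    exact fun hdvd ↦ hpi.ne
      (eq_of_dvd_sub_of_incongruent hincong p (mem_Icc.2 ⟨hp1, by omega⟩) i hi hdvd)
  have htotal := sum_Icc_ediv_sub_eq hincong hsum hi
  rw [hsplit, sum_insert (by simp only [mem_union, mem_Ico, mem_Ioc]; omega), sum_union hdisj,
    sub_self, Int.zero_ediv, zero_add] at htotal
  simp only [Int.fdiv_eq_ediv_of_nonneg _ hn.le]
  rw [sum_congr rfl hlower, sum_sub_distrib, sum_neg_distrib, sum_const, Nat.card_Ico,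
    nsmul_eq_mul, Nat.cast_sub hi1]
  push_cast
  linarith

theorem affine_window_formula (n : ℕ) (hn : 1 ≤ n) (a : ℕ → ℤ)
    (hincong : ∀ i j, 1 ≤ i → i < j → j ≤ n → ¬ ((n : ℤ) ∣ (a i - a j)))
    (hsum : 2 * ∑ i ∈ Finset.Icc 1 n, a i = (n : ℤ) * ((n : ℤ) + 1)) :
    ∀ i, 1 ≤ i → i ≤ n →
      a i = (i : ℤ) - (∑ p ∈ Finset.Ioc i n, Int.fdiv (a p - a i) (n : ℤ))
              + ∑ p ∈ Finset.Ico 1 i, Int.fdiv (a i - a p) (n : ℤ) :=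
  affine_window_formula_general n a hincong hsum
end

section
/- Let v be an admitted vector and define a_i = i + Σ_{p<i} v_{pi} − Σ_{i<p} v_{ip} for 1 ≤ i ≤ n. Then for all 1 ≤ i < j ≤ n: a_j − a_i = j − i + n·v_{ij} − Σ_{i<p<j} δ_{ipj}(v) + Σ_{p<i} δ_{pij}(v) + Σ_{j<p} δ_{ijp}(v); consequently a_j − a_i = n·v_{ij} + r with r ∈ {1,...,n−1}, so ⌊(a_j − a_i)/n⌋ = v_{ij} and a_1 < a_2 < ... < a_n. -/
/-- The window entries `a_i = i + Σ_{p<i} v_{pi} − Σ_{i<p} v_{ip}`. -/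
def winF (n : ℕ) (v : ℕ → ℕ → ℤ) (i : ℕ) : ℤ :=
  (i : ℤ) + ∑ p ∈ Finset.Ico 1 i, v p i - ∑ p ∈ Finset.Ioc i n, v i p

/-!
Splitting the two sums in `a_j − a_i` at `i` and `j` and regrouping term by term gives the
identity, for any `v`. Admissibility puts every `δ` in `{0, 1}`, so the three `δ`-sums lie in
`[0, j − i − 1]`, `[0, i − 1]` and `[0, n − j]`; hence the remainder
`r = j − i − Σ_{i<p<j} δ + Σ_{p<i} δ + Σ_{j<p} δ` lies in `[1, n − 1]`, which pins down the
floor quotient and, as `v_{ij} ≥ 0`, gives `a_i < a_j`.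
-/

open Finset

theorem Finset.sum_mem_Icc_card {ι R : Type*} [AddCommMonoidWithOne R] [PartialOrder R]
    [IsOrderedAddMonoid R] {s : Finset ι} {f : ι → R} (h : ∀ p ∈ s, f p ∈ Set.Icc 0 1) :
    ∑ p ∈ s, f p ∈ Set.Icc 0 (#s : R) := by
  refine ⟨sum_nonneg fun p hp => (h p hp).1, ?_⟩
  simpa using sum_le_card_nsmul s f 1 fun p hp => (h p hp).2

theorem IsAdmitted.dlt_mem_Icc {n : ℕ} {v : ℕ → ℕ → ℤ} (hv : IsAdmitted n v) {i j k : ℕ}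
    (hi : 1 ≤ i) (hij : i < j) (hjk : j < k) (hkn : k ≤ n) : dlt v i j k ∈ Set.Icc 0 1 := by
  have := hv.2.2 i j k hi hij hjk hkn
  constructor <;> unfold dlt <;> linarith

theorem winF_sub_winF (n : ℕ) (v : ℕ → ℕ → ℤ) {i j : ℕ} (hi : 1 ≤ i) (hij : i < j) (hjn : j ≤ n) :
    winF n v j - winF n v i
      = (j : ℤ) - (i : ℤ) + (n : ℤ) * v i j
        - (∑ p ∈ Ioo i j, dlt v i p j)
        + (∑ p ∈ Ico 1 i, dlt v p i j)
        + ∑ p ∈ Ioc j n, dlt v i j p := by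
  have split_left : ∑ p ∈ Ico 1 j, v p j
      = ∑ p ∈ Ico 1 i, v p j + v i j + ∑ p ∈ Ioo i j, v p j := by
    rw [← sum_Ico_consecutive _ hi hij.le, ← Ioo_insert_left hij,
      sum_insert left_notMem_Ioo, add_assoc]
  have split_right : ∑ p ∈ Ioc i n, v i p
      = ∑ p ∈ Ioo i j, v i p + v i j + ∑ p ∈ Ioc j n, v i p := by
    rw [← sum_Ioc_consecutive _ hij.le hjn, ← Ioo_insert_right hij,
      sum_insert right_notMem_Ioo, add_comm (v i j)]
  simp only [winF, dlt, split_left, split_right, sum_sub_distrib, sum_const, nsmul_eq_mul,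
    Nat.card_Ioo, Nat.card_Ico, Nat.card_Ioc]
  rw [show ((j - i - 1 : ℕ) : ℤ) = j - i - 1 by omega, show ((i - 1 : ℕ) : ℤ) = i - 1 by omega,
    show ((n - j : ℕ) : ℤ) = n - j by omega]
  ring

theorem window_difference_formula (n : ℕ) (v : ℕ → ℕ → ℤ) (hv : IsAdmitted n v) :
    ∀ i j, 1 ≤ i → i < j → j ≤ n →
      (winF n v j - winF n v i
          = (j : ℤ) - (i : ℤ) + (n : ℤ) * v i j
            - (∑ p ∈ Finset.Ioo i j, dlt v i p j)
            + (∑ p ∈ Finset.Ico 1 i, dlt v p i j)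
            + ∑ p ∈ Finset.Ioc j n, dlt v i j p) ∧
      (∃ r : ℤ, 1 ≤ r ∧ r ≤ (n : ℤ) - 1 ∧
        winF n v j - winF n v i = (n : ℤ) * v i j + r) ∧
      Int.fdiv (winF n v j - winF n v i) (n : ℤ) = v i j ∧
      winF n v i < winF n v j := by
  intro i j hi hij hjn
  have hdiff := winF_sub_winF n v hi hij hjn
  have hA := sum_mem_Icc_card fun p hp =>
    hv.dlt_mem_Icc hi (mem_Ioo.1 hp).1 (mem_Ioo.1 hp).2 hjn
  have hB := sum_mem_Icc_card fun p hp =>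
    hv.dlt_mem_Icc (mem_Ico.1 hp).1 (mem_Ico.1 hp).2 hij hjn
  have hC := sum_mem_Icc_card fun p hp =>
    hv.dlt_mem_Icc hi hij (mem_Ioc.1 hp).1 (mem_Ioc.1 hp).2
  simp only [Nat.card_Ioo, Nat.card_Ico, Nat.card_Ioc, Set.mem_Icc] at hA hB hC
  set r := (j : ℤ) - i - (∑ p ∈ Ioo i j, dlt v i p j) + (∑ p ∈ Ico 1 i, dlt v p i j)
    + ∑ p ∈ Ioc j n, dlt v i j p
  have hr : 1 ≤ r ∧ r ≤ (n : ℤ) - 1 := by omega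
  have hqr : winF n v j - winF n v i = n * v i j + r := by rw [hdiff]; ring
  have hfdiv : Int.fdiv (winF n v j - winF n v i) n = v i j := by
    rw [Int.fdiv_eq_ediv_of_nonneg _ (by omega)]
    exact ((Int.ediv_emod_unique (by omega)).2 ⟨by rw [hqr, add_comm], by omega, by omega⟩).1
  have hvij : 0 ≤ v i j := hv.1 i j hi hij hjn
  refine ⟨hdiff, ⟨r, hr.1, hr.2, hqr⟩, hfdiv, ?_⟩
  linarith [mul_nonneg n.cast_nonneg hvij]
end
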